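/- For n ≥ 1, the function g_n(t) = ∑_{k=1}^n (1 − k/n)(1/k) sin(kt) satisfies sup_t |g_n(t)| ≤ 2π. -/

import Mathlib

/-! The derivative of `g_n` is `(F_n - 1) / 2`, where `F_n(t) = |∑_{j<n} e^{ijt}|² / n` is the
Fejér kernel. Since `F_n ≥ 0`, the function `g_n(t) + t/2` is monotone; it vanishes at `0` and
equals `π` at `2π`, so `-π ≤ -t/2 ≤ g_n(t) ≤ π - t/2 ≤ π` on `[0, 2π]`, and periodicity extends
the bound `|g_n| ≤ π` to all of `ℝ`. -/

open Real Complex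

/-- `g_n(t) = ∑_{k=1}^n (1 - k/n)(1/k) sin(kt)` (real valued). -/
noncomputable def gFun (n : ℕ) (t : ℝ) : ℝ :=
  ∑ k ∈ Finset.Icc 1 n, (1 - (k : ℝ) / n) * (1 / k) * Real.sin (k * t)

open Finset

noncomputable def fejerKernel (n : ℕ) (t : ℝ) : ℝ :=
  1 + 2 * ∑ k ∈ Icc 1 n, (1 - (k : ℝ) / n) * Real.cos (k * t)

lemma sum_range_cos_sub_mul (n : ℕ) (t : ℝ) :
    ∑ j ∈ range n, Real.cos (((n : ℝ) - j) * t) = ∑ k ∈ Icc 1 n, Real.cos (k * t) := by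
  induction n with
  | zero => simp
  | succ n ih =>
    rw [sum_range_succ', sum_Icc_succ_top (by omega), ← ih]
    push_cast
    simp only [add_sub_add_right_eq_sub, sub_zero, add_comm]

lemma sum_cos_mul_add_sum_sin_mul (n : ℕ) (t : ℝ) :
    (∑ j ∈ range n, Real.cos (j * t)) * Real.cos (n * t)
      + (∑ j ∈ range n, Real.sin (j * t)) * Real.sin (n * t)
      = ∑ k ∈ Icc 1 n, Real.cos (k * t) := by
  rw [sum_mul, sum_mul, ← sum_add_distrib, ← sum_range_cos_sub_mul]
  refine sum_congr rfl fun j _ => ?_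
  rw [sub_mul, Real.cos_sub]
  ring

lemma sum_cos_sq_add_sum_sin_sq (n : ℕ) (t : ℝ) :
    (∑ j ∈ range n, Real.cos (j * t)) ^ 2 + (∑ j ∈ range n, Real.sin (j * t)) ^ 2
      = n + 2 * ∑ k ∈ Icc 1 n, ((n : ℝ) - k) * Real.cos (k * t) := by
  induction n with
  | zero => simp
  | succ n ih =>
    have hweights : ∑ k ∈ Icc 1 (n + 1), ((n + 1 : ℕ) - (k : ℝ)) * Real.cos (k * t)
        = ∑ k ∈ Icc 1 n, ((n : ℝ) - k) * Real.cos (k * t) + ∑ k ∈ Icc 1 n, Real.cos (k * t) := by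
      rw [sum_Icc_succ_top (by omega), ← sum_add_distrib]
      push_cast
      simp only [sub_self, zero_mul, add_zero]
      exact sum_congr rfl fun k _ => by ring
    rw [hweights, sum_range_succ, sum_range_succ]
    push_cast
    linear_combination ih + 2 * sum_cos_mul_add_sum_sin_mul n t + Real.sin_sq_add_cos_sq (n * t)

lemma fejerKernel_eq {n : ℕ} (hn : n ≠ 0) (t : ℝ) :
    fejerKernel n t
      = ((∑ j ∈ range n, Real.cos (j * t)) ^ 2 + (∑ j ∈ range n, Real.sin (j * t)) ^ 2) / n := by
  have hn' : (n : ℝ) ≠ 0 := by exact_mod_cast hn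
  rw [sum_cos_sq_add_sum_sin_sq, fejerKernel, eq_div_iff hn', mul_sum, mul_sum, add_mul, sum_mul]
  congr 1
  · ring
  · refine sum_congr rfl fun k _ => ?_
    field_simp

lemma fejerKernel_nonneg (n : ℕ) (t : ℝ) : 0 ≤ fejerKernel n t := by
  rcases eq_or_ne n 0 with rfl | hn
  · simp [fejerKernel]
  · rw [fejerKernel_eq hn]
    positivity

lemma hasDerivAt_gFun (n : ℕ) (t : ℝ) :
    HasDerivAt (gFun n) ((fejerKernel n t - 1) / 2) t := by
  have hsum : (fejerKernel n t - 1) / 2 = ∑ k ∈ Icc 1 n, (1 - (k : ℝ) / n) * Real.cos (k * t) := by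
    rw [fejerKernel]; ring
  rw [hsum]
  refine HasDerivAt.fun_sum fun k hkmem => ?_
  have hk : (k : ℝ) ≠ 0 := by have := (mem_Icc.mp hkmem).1; positivity
  refine ((((hasDerivAt_id' t).const_mul (k : ℝ)).sin).const_mul _).congr_deriv ?_
  field_simp

lemma gFun_zero (n : ℕ) : gFun n 0 = 0 := by
  simp [gFun]

lemma gFun_periodic (n : ℕ) : Function.Periodic (gFun n) (2 * π) := fun t => by
  refine sum_congr rfl fun k _ => ?_
  rw [show (k : ℝ) * (t + 2 * π) = k * t + k * (2 * π) by ring, Real.sin_add_nat_mul_two_pi]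

lemma monotone_gFun_add_half (n : ℕ) : Monotone fun t => gFun n t + t / 2 :=
  monotone_of_hasDerivAt_nonneg (f' := fun t => fejerKernel n t / 2)
    (fun t => ((hasDerivAt_gFun n t).add ((hasDerivAt_id' t).div_const 2)).congr_deriv (by ring))
    (fun t => div_nonneg (fejerKernel_nonneg n t) zero_le_two)

lemma abs_gFun_le_pi (n : ℕ) (t : ℝ) : |gFun n t| ≤ π := by
  obtain ⟨s, ⟨hs0, hs2π⟩, hs⟩ := (gFun_periodic n).exists_mem_Ico₀ two_pi_pos t
  have hlow := monotone_gFun_add_half n hs0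
  have hup := monotone_gFun_add_half n hs2π.le
  simp only [gFun_zero, (gFun_periodic n).eq, zero_div, add_zero, zero_add] at hlow hup
  rw [hs, abs_le]
  constructor <;> linarith

theorem gFun_sup_bound_general (n : ℕ) : ∀ t : ℝ, |gFun n t| ≤ 2 * Real.pi :=
  fun t => (abs_gFun_le_pi n t).trans (by linarith [pi_pos])

theorem gFun_sup_bound (n : ℕ) (hn : 1 ≤ n) : ∀ t : ℝ, |gFun n t| ≤ 2 * Real.pi :=
  gFun_sup_bound_general n
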